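/- Let f be an FIF on SG with uniform vertical scaling factor d. Then for every word ω ∈ {1,2,3}^n (n ≥ 1), every nonnegative integer m, and all distinct i, j ∈ {1,2,3}, Δ_{n+m+1}f(P_ω(P_i(q_j))) = d^n · Δ_{m+1}f(P_i(q_j)). -/

import Mathlib

open Finset Filter

noncomputable section

/-- Points in the plane. -/
abbrev Pt := Fin 2 → ℝ

/-- The three contraction maps `P_i(x) = (x + q_i)/2`. -/
def Pmap (q : Fin 3 → Pt) (i : Fin 3) (x : Pt) : Pt := (x + q i) / 2

/-- `Pw q m ω = P_{ω 0} ∘ P_{ω 1} ∘ ⋯ ∘ P_{ω (m-1)}` for a word `ω` of length `m`. -/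
def Pw (q : Fin 3 → Pt) : (m : ℕ) → (Fin m → Fin 3) → Pt → Pt
  | 0, _, x => x
  | m + 1, ω, x => Pmap q (ω 0) (Pw q m (fun k => ω k.succ) x)

/-- The level-`m` vertex set `V_m`. -/
def V (q : Fin 3 → Pt) (m : ℕ) : Set Pt :=
  {x | ∃ ω : Fin m → Fin 3, ∃ i : Fin 3, x = Pw q m ω (q i)}

/-- `V_* = ⋃ m, V_m`. -/
def Vstar (q : Fin 3 → Pt) : Set Pt := ⋃ m, V q m

/-- The Sierpinski gasket, as the closure of `V_*`. -/
def SG (q : Fin 3 → Pt) : Set Pt := closure (Vstar q)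

/-- The level-`m` graph energy. -/
def energy (q : Fin 3 → Pt) (m : ℕ) (u : Pt → ℝ) : ℝ :=
  (5/3 : ℝ)^m * ∑ ω : Fin m → Fin 3,
    ∑ p ∈ Finset.univ.filter (fun p : Fin 3 × Fin 3 => p.1 < p.2),
      (u (Pw q m ω (q p.1)) - u (Pw q m ω (q p.2)))^2

/-- The level-`m` bilinear graph energy. -/
def energyBil (q : Fin 3 → Pt) (m : ℕ) (u v : Pt → ℝ) : ℝ :=
  (5/3 : ℝ)^m * ∑ ω : Fin m → Fin 3,
    ∑ p ∈ Finset.univ.filter (fun p : Fin 3 × Fin 3 => p.1 < p.2),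
      (u (Pw q m ω (q p.1)) - u (Pw q m ω (q p.2))) *
        (v (Pw q m ω (q p.1)) - v (Pw q m ω (q p.2)))

open scoped Classical in
/-- The level-`m` graph Laplacian at `x`. -/
def graphLap (q : Fin 3 → Pt) (m : ℕ) (u : Pt → ℝ) (x : Pt) : ℝ :=
  ∑ ω : Fin m → Fin 3,
    ∑ p ∈ Finset.univ.filter (fun p : Fin 3 × Fin 3 => p.1 ≠ p.2 ∧ Pw q m ω (q p.1) = x),
      (u (Pw q m ω (q p.2)) - u x)

/-- A function is harmonic on `SG` if it is continuous on `SG` and satisfies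
the `1/5-2/5` rule. -/
def IsHarmonic (q : Fin 3 → Pt) (h : Pt → ℝ) : Prop :=
  ContinuousOn h (SG q) ∧
  ∀ (m : ℕ) (ω : Fin m → Fin 3) (i j k : Fin 3), i ≠ j → j ≠ k → i ≠ k →
    h (Pw q m ω (Pmap q i (q j))) =
      2/5 * h (Pw q m ω (q i)) + 2/5 * h (Pw q m ω (q j)) + 1/5 * h (Pw q m ω (q k))

/-- `f` is a fractal interpolation function on `SG` with vertical scaling factors `d i`. -/
def IsFIF (q : Fin 3 → Pt) (d : Fin 3 → ℝ) (f : Pt → ℝ) : Prop :=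
  ContinuousOn f (SG q) ∧
  ∃ h : Fin 3 → Pt → ℝ, (∀ i, IsHarmonic q (h i)) ∧
    ∀ i, ∀ x ∈ SG q, f (Pmap q i x) = d i * f x + h i x

/-!
Barycentric coordinates show that two distinct cells `P_a(T)`, `P_b(T)` of the triangle `T`
meet only in their common vertex. Hence a point `P_c(z)`, with `z ∈ T` not a vertex, lies in
a single level-one cell, and `Δ_{N+1} u (P_c z) = Δ_N (u ∘ P_c) z`; iterating gives
`Δ_{n+m+1} f (P_ω y) = Δ_{m+1} (f ∘ P_ω) y` at the midpoint `y = P_i(q_j)`.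
On `V_*` the FIF equation writes `f ∘ P_ω` as `d^n f` plus a function obeying the
`1/5–2/5` rule, and such a function has zero Laplacian at `y`: the Laplacian there splits
into the two cells meeting at `y`, each contribution is a vertex Laplacian that scales by
`3/5` per level, and at the bottom level the two cancel.
-/

section Geometry

variable {q : Fin 3 → Pt}

lemma Pmap_eq_midpoint (i : Fin 3) (x : Pt) : Pmap q i x = midpoint ℝ x (q i) := by
  ext t
  simp only [Pmap, Pi.div_apply, Pi.add_apply, Pi.ofNat_apply, pi_midpoint_apply,
    midpoint_eq_smul_add, invOf_eq_inv, smul_eq_mul]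
  ring

lemma Pmap_injective (i : Fin 3) : Function.Injective (Pmap q i) := by
  intro x y h
  ext t
  have ht := congrFun h t
  simp only [Pmap, Pi.div_apply, Pi.add_apply, Pi.ofNat_apply] at ht
  linarith

lemma Pmap_self (i : Fin 3) : Pmap q i (q i) = q i := by
  rw [Pmap_eq_midpoint, midpoint_self]

lemma Pmap_comm (i j : Fin 3) : Pmap q i (q j) = Pmap q j (q i) := by
  rw [Pmap_eq_midpoint, Pmap_eq_midpoint, midpoint_comm]

lemma Pw_cons {N : ℕ} (a : Fin 3) (τ : Fin N → Fin 3) (x : Pt) :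
    Pw q (N + 1) (Fin.cons a τ) x = Pmap q a (Pw q N τ x) := by
  simp only [Pw, Fin.cons_zero, Fin.cons_succ]

lemma vertex_mem_convexHull (i : Fin 3) : q i ∈ convexHull ℝ (Set.range q) :=
  subset_convexHull ℝ _ (Set.mem_range_self i)

lemma Pmap_mem_convexHull (i : Fin 3) {x : Pt} (hx : x ∈ convexHull ℝ (Set.range q)) :
    Pmap q i x ∈ convexHull ℝ (Set.range q) := by
  rw [Pmap_eq_midpoint]
  exact (convex_convexHull ℝ _).midpoint_mem hx (vertex_mem_convexHull i)

lemma Pw_mem_convexHull : ∀ (N : ℕ) (σ : Fin N → Fin 3) {x : Pt},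
    x ∈ convexHull ℝ (Set.range q) → Pw q N σ x ∈ convexHull ℝ (Set.range q)
  | 0, _, _, hx => hx
  | N + 1, σ, _, hx => Pmap_mem_convexHull (σ 0) (Pw_mem_convexHull N _ hx)

def triangleBasis (hq : AffineIndependent ℝ q) : AffineBasis (Fin 3) ℝ Pt :=
  ⟨q, hq, hq.affineSpan_eq_top_iff_card_eq_finrank_add_one.2 (by simp)⟩

variable (hq : AffineIndependent ℝ q)
include hq

lemma coord_Pmap (a c : Fin 3) (x : Pt) :
    (triangleBasis hq).coord a (Pmap q c x) =
      ((triangleBasis hq).coord a x + if a = c then 1 else 0) / 2 := by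
  rw [Pmap_eq_midpoint, AffineMap.map_midpoint, midpoint_eq_smul_add,
    show q c = triangleBasis hq c from rfl, AffineBasis.coord_apply]
  simp [div_eq_inv_mul]

lemma coord_nonneg {x : Pt} (hx : x ∈ convexHull ℝ (Set.range q)) (a : Fin 3) :
    0 ≤ (triangleBasis hq).coord a x := by
  rw [show Set.range q = Set.range (triangleBasis hq) from rfl,
    AffineBasis.convexHull_eq_nonneg_coord] at hx
  exact hx a

lemma eq_vertex_of_one_le_coord {x : Pt} (hx : x ∈ convexHull ℝ (Set.range q)) {a : Fin 3}
    (ha : 1 ≤ (triangleBasis hq).coord a x) : x = q a := by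
  set b := triangleBasis hq
  have hsum := b.sum_coord_apply_eq_one x
  refine b.ext_elem fun i => ?_
  rw [show q a = b a from rfl, b.coord_apply]
  split_ifs with hia
  · subst hia
    linarith [single_le_sum (fun i _ => coord_nonneg hq hx i) (mem_univ i) (f := (b.coord · x))]
  · have hpair := sum_le_sum_of_subset_of_nonneg (subset_univ {i, a})
      (fun j _ _ => coord_nonneg hq hx j) (f := (b.coord · x))
    rw [sum_pair hia] at hpair
    linarith [coord_nonneg hq hx i]

/-- Two distinct level-one cells meet only at their common vertex. -/
lemma eq_vertex_of_Pmap_eq_Pmap {a b : Fin 3} (hab : a ≠ b) {u v : Pt}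
    (hu : u ∈ convexHull ℝ (Set.range q)) (hv : v ∈ convexHull ℝ (Set.range q))
    (h : Pmap q a u = Pmap q b v) : v = q a := by
  refine eq_vertex_of_one_le_coord hq hv ?_
  have hcoord := congrArg ((triangleBasis hq).coord a) h
  rw [coord_Pmap, coord_Pmap, if_pos rfl, if_neg hab] at hcoord
  linarith [coord_nonneg hq hu a]

lemma Pmap_eq_vertex_iff {c b : Fin 3} {u : Pt} (hu : u ∈ convexHull ℝ (Set.range q)) :
    Pmap q c u = q b ↔ c = b ∧ u = q b := by
  refine ⟨fun h => ?_, by rintro ⟨rfl, rfl⟩; exact Pmap_self c⟩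
  by_cases hcb : c = b
  · subst hcb
    exact ⟨rfl, Pmap_injective c (h.trans (Pmap_self c).symm)⟩
  · exact absurd (hq.injective (eq_vertex_of_Pmap_eq_Pmap hq hcb hu (vertex_mem_convexHull b)
      (h.trans (Pmap_self b).symm))).symm hcb

lemma Pmap_vertex_ne_vertex {i j : Fin 3} (hij : i ≠ j) (a : Fin 3) :
    Pmap q i (q j) ≠ q a := by
  intro h
  obtain ⟨rfl, hja⟩ := (Pmap_eq_vertex_iff hq (vertex_mem_convexHull j)).1 h
  exact hij (hq.injective hja).symm

lemma Pw_ne_vertex {z : Pt} (hz : z ∈ convexHull ℝ (Set.range q)) (hz' : ∀ a, z ≠ q a) :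
    ∀ (N : ℕ) (σ : Fin N → Fin 3) (a : Fin 3), Pw q N σ z ≠ q a
  | 0, _, a => hz' a
  | N + 1, _, a => fun h =>
    Pw_ne_vertex hz hz' N _ a ((Pmap_eq_vertex_iff hq (Pw_mem_convexHull N _ hz)).1 h).2

end Geometry

lemma Fin.three_eq_or_eq_or_eq {a b c : Fin 3} (hab : a ≠ b) (hbc : b ≠ c) (hac : a ≠ c)
    (p : Fin 3) : p = a ∨ p = b ∨ p = c := by
  revert a b c p
  decide

lemma Fin.three_exists_ne_ne (i j : Fin 3) : ∃ k, i ≠ k ∧ j ≠ k := by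
  revert i j
  decide

section Laplacian

variable {q : Fin 3 → Pt}

open scoped Classical in
lemma graphLap_succ (N : ℕ) (u : Pt → ℝ) (x : Pt) :
    graphLap q (N + 1) u x = ∑ a, ∑ τ : Fin N → Fin 3,
      ∑ p ∈ univ.filter (fun p : Fin 3 × Fin 3 => p.1 ≠ p.2 ∧ Pmap q a (Pw q N τ (q p.1)) = x),
        (u (Pmap q a (Pw q N τ (q p.2))) - u x) := by
  rw [graphLap, ← (Fin.consEquiv fun _ => Fin 3).sum_comp, Fintype.sum_prod_type]
  rfl

lemma graphLap_succ_eq_sum {x : Pt} (s : Finset (Fin 3)) (y : Fin 3 → Pt)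
    (hy : ∀ a ∈ s, Pmap q a (y a) = x)
    (hs : ∀ a ∉ s, ∀ w ∈ convexHull ℝ (Set.range q), Pmap q a w ≠ x) (N : ℕ) (u : Pt → ℝ) :
    graphLap q (N + 1) u x = ∑ a ∈ s, graphLap q N (u ∘ Pmap q a) (y a) := by
  rw [graphLap_succ, ← sum_subset (subset_univ s)]
  · refine sum_congr rfl fun a ha => ?_
    rw [← hy a ha]
    simp only [(Pmap_injective a).eq_iff]
    rfl
  · intro a _ ha
    refine sum_eq_zero fun τ _ => sum_eq_zero fun p hp => ?_
    exact absurd (mem_filter.1 hp).2.2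
      (hs a ha _ (Pw_mem_convexHull N τ (vertex_mem_convexHull p.1)))

variable (hq : AffineIndependent ℝ q)
include hq

lemma graphLap_succ_Pmap {z : Pt} (hz : z ∈ convexHull ℝ (Set.range q)) (hz' : ∀ a, z ≠ q a)
    (c : Fin 3) (N : ℕ) (u : Pt → ℝ) :
    graphLap q (N + 1) u (Pmap q c z) = graphLap q N (u ∘ Pmap q c) z := by
  rw [graphLap_succ_eq_sum {c} (fun _ => z) (by simp) ?_, sum_singleton]
  intro a ha w hw h
  exact hz' a (eq_vertex_of_Pmap_eq_Pmap hq (by simpa using ha) hw hz h)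

lemma graphLap_succ_vertex (b : Fin 3) (N : ℕ) (u : Pt → ℝ) :
    graphLap q (N + 1) u (q b) = graphLap q N (u ∘ Pmap q b) (q b) := by
  rw [graphLap_succ_eq_sum {b} (fun _ => q b) (by simp [Pmap_self]) ?_, sum_singleton]
  intro a ha w hw h
  exact ha (mem_singleton.2 ((Pmap_eq_vertex_iff hq hw).1 h).1)

lemma graphLap_succ_midpoint {i j : Fin 3} (hij : i ≠ j) (N : ℕ) (u : Pt → ℝ) :
    graphLap q (N + 1) u (Pmap q i (q j)) =
      graphLap q N (u ∘ Pmap q i) (q j) + graphLap q N (u ∘ Pmap q j) (q i) := by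
  rw [graphLap_succ_eq_sum {i, j} (fun a => if a = i then q j else q i) ?_ ?_, sum_pair hij,
    if_pos rfl, if_neg hij.symm]
  · intro a ha
    rcases mem_insert.1 ha with rfl | ha
    · rw [if_pos rfl]
    · rw [mem_singleton.1 ha, if_neg hij.symm, Pmap_comm]
  · intro a ha w hw h
    simp only [mem_insert, mem_singleton, not_or] at ha
    exact ha.2 (hq.injective (eq_vertex_of_Pmap_eq_Pmap hq ha.1 hw
      (vertex_mem_convexHull j) h)).symm

lemma graphLap_Pw {z : Pt} (hz : z ∈ convexHull ℝ (Set.range q)) (hz' : ∀ a, z ≠ q a) (k : ℕ) :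
    ∀ (N : ℕ) (σ : Fin N → Fin 3) (u : Pt → ℝ),
      graphLap q (N + k) u (Pw q N σ z) = graphLap q k (u ∘ Pw q N σ) z
  | 0, _, u => by rw [zero_add]; rfl
  | N + 1, σ, u => by
    rw [Nat.succ_add]
    exact (graphLap_succ_Pmap hq (Pw_mem_convexHull N _ hz) (Pw_ne_vertex hq hz hz' N _)
      (σ 0) (N + k) u).trans (graphLap_Pw hz hz' k N _ _)

lemma graphLap_zero_vertex {a b c : Fin 3} (hab : a ≠ b) (hbc : b ≠ c) (hac : a ≠ c)
    (u : Pt → ℝ) : graphLap q 0 u (q b) = (u (q a) - u (q b)) + (u (q c) - u (q b)) := by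
  have hfilter (ω : Fin 0 → Fin 3) : univ.filter (fun p : Fin 3 × Fin 3 =>
      p.1 ≠ p.2 ∧ Pw q 0 ω (q p.1) = q b) = {(b, a), (b, c)} := by
    ext ⟨p₁, p₂⟩
    simp only [Pw, mem_filter, mem_univ, true_and, hq.injective.eq_iff, mem_insert,
      mem_singleton, Prod.mk.injEq]
    rcases Fin.three_eq_or_eq_or_eq hab hbc hac p₂ with rfl | rfl | rfl <;> grind
  rw [graphLap, Fintype.sum_unique, hfilter, sum_pair (by simpa using hac)]
  rfl

end Laplacian

def HarmonicRule (q : Fin 3 → Pt) (h : Pt → ℝ) : Prop :=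
  ∀ (m : ℕ) (ω : Fin m → Fin 3) (i j k : Fin 3), i ≠ j → j ≠ k → i ≠ k →
    h (Pw q m ω (Pmap q i (q j))) =
      2/5 * h (Pw q m ω (q i)) + 2/5 * h (Pw q m ω (q j)) + 1/5 * h (Pw q m ω (q k))

lemma IsHarmonic.harmonicRule {q : Fin 3 → Pt} {h : Pt → ℝ} (hh : IsHarmonic q h) :
    HarmonicRule q h :=
  hh.2

namespace HarmonicRule

variable {q : Fin 3 → Pt} {g : Pt → ℝ}

lemma comp_Pmap (hg : HarmonicRule q g) (c : Fin 3) : HarmonicRule q (g ∘ Pmap q c) := by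
  intro m σ i j k hij hjk hik
  simpa only [Function.comp_apply, Pw_cons] using hg (m + 1) (Fin.cons c σ) i j k hij hjk hik

lemma comp_Pw (hg : HarmonicRule q g) (N : ℕ) (σ : Fin N → Fin 3) :
    HarmonicRule q (g ∘ Pw q N σ) := by
  induction N generalizing g with
  | zero => exact hg
  | succ N ih => exact ih (hg.comp_Pmap (σ 0)) _

lemma apply_Pmap_vertex (hg : HarmonicRule q g) {i j k : Fin 3} (hij : i ≠ j) (hjk : j ≠ k)
    (hik : i ≠ k) : g (Pmap q i (q j)) = 2/5 * g (q i) + 2/5 * g (q j) + 1/5 * g (q k) :=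
  hg 0 Fin.elim0 i j k hij hjk hik

variable (hq : AffineIndependent ℝ q)
include hq

lemma graphLap_zero_comp_Pmap_vertex (hg : HarmonicRule q g) (b : Fin 3) :
    graphLap q 0 (g ∘ Pmap q b) (q b) = 3/5 * graphLap q 0 g (q b) := by
  obtain ⟨a, hab⟩ := exists_ne b
  obtain ⟨c, hac, hbc⟩ := Fin.three_exists_ne_ne a b
  rw [graphLap_zero_vertex hq hab hbc hac, graphLap_zero_vertex hq hab hbc hac]
  simp only [Function.comp_apply, Pmap_self]
  rw [hg.apply_Pmap_vertex hab.symm hac hbc, hg.apply_Pmap_vertex hbc hac.symm hab.symm]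
  ring

lemma graphLap_vertex : ∀ (m : ℕ) {g : Pt → ℝ}, HarmonicRule q g → ∀ b : Fin 3,
    graphLap q m g (q b) = (3/5)^m * graphLap q 0 g (q b)
  | 0, _, _, _ => by rw [pow_zero, one_mul]
  | m + 1, g, hg, b => by
    rw [graphLap_succ_vertex hq, graphLap_vertex m (hg.comp_Pmap b) b,
      graphLap_zero_comp_Pmap_vertex hq hg b]
    ring

lemma graphLap_midpoint (hg : HarmonicRule q g) {i j : Fin 3} (hij : i ≠ j) (m : ℕ) :
    graphLap q (m + 1) g (Pmap q i (q j)) = 0 := by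
  obtain ⟨k, hik, hjk⟩ := Fin.three_exists_ne_ne i j
  rw [graphLap_succ_midpoint hq hij, graphLap_vertex hq m (hg.comp_Pmap i),
    graphLap_vertex hq m (hg.comp_Pmap j), graphLap_zero_vertex hq hij hjk hik,
    graphLap_zero_vertex hq hij.symm hik hjk]
  simp only [Function.comp_apply, Pmap_self, Pmap_comm j i]
  rw [hg.apply_Pmap_vertex hij hjk hik, hg.apply_Pmap_vertex hik hjk.symm hij,
    hg.apply_Pmap_vertex hjk hik.symm hij.symm]
  ring

end HarmonicRule

section FractalInterpolation

variable {q : Fin 3 → Pt}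

lemma vertex_mem_Vstar (p : Fin 3) : q p ∈ Vstar q :=
  Set.mem_iUnion.2 ⟨0, Fin.elim0, p, rfl⟩

lemma Pmap_mem_Vstar (c : Fin 3) {x : Pt} (hx : x ∈ Vstar q) : Pmap q c x ∈ Vstar q := by
  obtain ⟨m, τ, p, rfl⟩ := Set.mem_iUnion.1 hx
  exact Set.mem_iUnion.2 ⟨m + 1, Fin.cons c τ, p, (Pw_cons c τ (q p)).symm⟩

lemma Pw_mem_Vstar : ∀ (N : ℕ) (σ : Fin N → Fin 3) {x : Pt}, x ∈ Vstar q → Pw q N σ x ∈ Vstar q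
  | 0, _, _, hx => hx
  | N + 1, σ, _, hx => Pmap_mem_Vstar (σ 0) (Pw_mem_Vstar N _ hx)

lemma graphLap_congr {m : ℕ} {u v : Pt → ℝ} {x : Pt} (huv : ∀ y ∈ Vstar q, u y = v y)
    (hx : x ∈ Vstar q) : graphLap q m u x = graphLap q m v x := by
  refine sum_congr rfl fun τ _ => sum_congr rfl fun p _ => ?_
  rw [huv _ hx, huv _ (Pw_mem_Vstar m τ (vertex_mem_Vstar p.2))]

lemma graphLap_const_mul_add (m : ℕ) (c : ℝ) (u v : Pt → ℝ) (x : Pt) :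
    graphLap q m (fun y => c * u y + v y) x = c * graphLap q m u x + graphLap q m v x := by
  simp only [graphLap, mul_sum, ← sum_add_distrib]
  refine sum_congr rfl fun τ _ => sum_congr rfl fun p _ => ?_
  ring

lemma IsFIF.graphLap_comp_Pw_midpoint (hq : AffineIndependent ℝ q) {d : ℝ} {f : Pt → ℝ}
    (hf : IsFIF q (fun _ => d) f) {i j : Fin 3} (hij : i ≠ j) (m : ℕ) :
    ∀ (N : ℕ) (σ : Fin N → Fin 3), graphLap q (m + 1) (f ∘ Pw q N σ) (Pmap q i (q j)) =
      d ^ N * graphLap q (m + 1) f (Pmap q i (q j))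
  | 0, _ => by rw [pow_zero, one_mul]; rfl
  | N + 1, σ => by
    obtain ⟨h, hh, hfh⟩ := hf.2
    have hsplit : ∀ y ∈ Vstar q, (f ∘ Pw q (N + 1) σ) y =
        d * (f ∘ Pw q N (fun k => σ k.succ)) y + (h (σ 0) ∘ Pw q N (fun k => σ k.succ)) y :=
      fun y hy => hfh (σ 0) _ (subset_closure (Pw_mem_Vstar N _ hy))
    rw [graphLap_congr hsplit (Pmap_mem_Vstar i (vertex_mem_Vstar j)), graphLap_const_mul_add,
      IsFIF.graphLap_comp_Pw_midpoint hq hf hij m N,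
      ((hh (σ 0)).harmonicRule.comp_Pw N _).graphLap_midpoint hq hij m, pow_succ]
    ring

end FractalInterpolation

theorem stmt_9_general (q : Fin 3 → Pt) (hq : AffineIndependent ℝ q)
    (d : ℝ)
    (f : Pt → ℝ) (hf : IsFIF q (fun _ => d) f)
    (n : ℕ) (ω : Fin n → Fin 3) (m : ℕ)
    (i j : Fin 3) (hij : i ≠ j) :
    graphLap q (n+m+1) f (Pw q n ω (Pmap q i (q j))) =
      d^n * graphLap q (m+1) f (Pmap q i (q j)) :=
  calc graphLap q (n + (m + 1)) f (Pw q n ω (Pmap q i (q j)))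
      = graphLap q (m + 1) (f ∘ Pw q n ω) (Pmap q i (q j)) :=
        graphLap_Pw hq (Pmap_mem_convexHull i (vertex_mem_convexHull j))
          (Pmap_vertex_ne_vertex hq hij) (m + 1) n ω f
    _ = d ^ n * graphLap q (m + 1) f (Pmap q i (q j)) :=
        hf.graphLap_comp_Pw_midpoint hq hij m n ω

/-- scaling of the graph Laplacian of an FIF under composition with
`P_ω`: `Δ_{n+m+1} f (P_ω(P_i(q_j))) = d^n Δ_{m+1} f (P_i(q_j))`. -/
theorem stmt_9 (q : Fin 3 → Pt) (hq : AffineIndependent ℝ q)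
    (d : ℝ) (hd : d ∈ Set.Ioo (-1 : ℝ) 1)
    (f : Pt → ℝ) (hf : IsFIF q (fun _ => d) f)
    (n : ℕ) (hn : 1 ≤ n) (ω : Fin n → Fin 3) (m : ℕ)
    (i j : Fin 3) (hij : i ≠ j) :
    graphLap q (n+m+1) f (Pw q n ω (Pmap q i (q j))) =
      d^n * graphLap q (m+1) f (Pmap q i (q j)) :=
  stmt_9_general q hq d f hf n ω m i j hij

end
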